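/- Let a, b, c ∈ ℝ³ be mutually orthogonal vectors, each of norm 1/√2. Let G be the four-outcome observable on Ω = {0,1}×{0,1} defined by G(i,j) := ‖n_{ij}‖ · (1/2)(I + (n_{ij}/‖n_{ij}‖)·σ) with n_{ij} := (1/2)((−1)^{i+1} a + (−1)^{j+1} b), and let F be the four-outcome observable defined analogously with the pair (b,c) in place of (a,b). Then G and F are not jointly measurable, but for every pair of subsets X ⊆ Ω and Y ⊆ Ω, the partitionings G^X and F^Y are jointly measurable. -/

import Mathlib

open Matrix
open scoped ComplexOrder

noncomputable section

/-- 2×2 complex matrices. -/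
abbrev Mat2 := Matrix (Fin 2) (Fin 2) ℂ

/-- The Pauli matrix σ₁. -/
def sigma1 : Mat2 := !![0, 1; 1, 0]
/-- The Pauli matrix σ₂. -/
def sigma2 : Mat2 := !![0, -Complex.I; Complex.I, 0]
/-- The Pauli matrix σ₃. -/
def sigma3 : Mat2 := !![1, 0; 0, -1]

/-- ℝ³ with the Euclidean norm. -/
abbrev E3 := EuclideanSpace ℝ (Fin 3)

/-- For `v ∈ ℝ³`, `v·σ = v₁σ₁ + v₂σ₂ + v₃σ₃`. -/
def dotSigma (v : E3) : Mat2 := (v 0 : ℂ) • sigma1 + (v 1 : ℂ) • sigma2 + (v 2 : ℂ) • sigma3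

/-- `A^{α,a} = (1/2)(α·I + a·σ)`. -/
def Amat (α : ℝ) (a : E3) : Mat2 := (2 : ℂ)⁻¹ • ((α : ℂ) • (1 : Mat2) + dotSigma a)

/-- An operator is an effect if `0 ≤ A ≤ I` in the Loewner order. -/
def IsEffect (A : Mat2) : Prop := A.PosSemidef ∧ (1 - A).PosSemidef

/-- The Loewner order: `A ≤ B` iff `B - A` is positive semidefinite. -/
def loewnerLE (A B : Mat2) : Prop := (B - A).PosSemidef

/-- The simple (two-outcome) qubit observable `E^{α,a}`,
with `E^{α,a}(1) = A^{α,a}` and `E^{α,a}(0) = I - A^{α,a}`. -/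
def Eobs (α : ℝ) (a : E3) : Fin 2 → Mat2 := fun i => if i = 1 then Amat α a else 1 - Amat α a

/-- `G` is a joint observable of the two-outcome observables `E` and `F`. -/
def IsJointObs (G : Fin 2 → Fin 2 → Mat2) (E F : Fin 2 → Mat2) : Prop :=
  (∀ i j, (G i j).PosSemidef) ∧ (∑ i, ∑ j, G i j) = 1 ∧
    (∀ i, (∑ j, G i j) = E i) ∧ (∀ j, (∑ i, G i j) = F j)

/-- Joint measurability of two two-outcome observables. -/
def JointlyMeasurable2 (E F : Fin 2 → Mat2) : Prop := ∃ G, IsJointObs G E F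

/-- `G` is a joint observable of the three two-outcome observables `E`, `F` and `K`. -/
def IsJointObs3 (G : Fin 2 → Fin 2 → Fin 2 → Mat2) (E F K : Fin 2 → Mat2) : Prop :=
  (∀ i j k, (G i j k).PosSemidef) ∧ (∑ i, ∑ j, ∑ k, G i j k) = 1 ∧
    (∀ i, (∑ j, ∑ k, G i j k) = E i) ∧ (∀ j, (∑ i, ∑ k, G i j k) = F j) ∧
    (∀ k, (∑ i, ∑ j, G i j k) = K k)

/-- Joint measurability of three two-outcome observables. -/
def JointlyMeasurable3 (E F K : Fin 2 → Mat2) : Prop := ∃ G, IsJointObs3 G E F K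

/-- `n_{ij} = (1/2)((-1)^{i+1} a + (-1)^{j+1} b)`. -/
def nvec (a b : E3) (i j : Fin 2) : E3 :=
  (2 : ℝ)⁻¹ • ((-1 : ℝ) ^ ((i : ℕ) + 1) • a + (-1 : ℝ) ^ ((j : ℕ) + 1) • b)

/-- `G(i,j) = ‖n_{ij}‖ (1/2)(I + (n_{ij}/‖n_{ij}‖)·σ)`. -/
def Gab (a b : E3) : Fin 2 → Fin 2 → Mat2 := fun i j =>
  (‖nvec a b i j‖ : ℂ) •
    ((2 : ℂ)⁻¹ • ((1 : Mat2) + dotSigma (‖nvec a b i j‖⁻¹ • nvec a b i j)))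

/-- `K` is a joint observable of the finite-outcome observables `E` (on `ι`) and `F` (on `κ`). -/
def IsJointObsFin {ι κ : Type*} [Fintype ι] [Fintype κ]
    (K : ι → κ → Mat2) (E : ι → Mat2) (F : κ → Mat2) : Prop :=
  (∀ i j, (K i j).PosSemidef) ∧ (∑ i, ∑ j, K i j) = 1 ∧
    (∀ i, (∑ j, K i j) = E i) ∧ (∀ j, (∑ i, K i j) = F j)

/-- Joint measurability of two finite-outcome observables. -/
def JMfin {ι κ : Type*} [Fintype ι] [Fintype κ] (E : ι → Mat2) (F : κ → Mat2) : Prop :=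
  ∃ K, IsJointObsFin K E F

/-- The partitioning `G^X` of a finite-outcome observable `G` with respect to `X`:
`G^X(1) = G(X) = Σ_{i ∈ X} G(i)` and `G^X(0) = I - G(X)`. -/
def partitioningFin {ι : Type*} [Fintype ι] (G : ι → Mat2) (X : Finset ι) : Fin 2 → Mat2 :=
  fun k => if k = 1 then ∑ i ∈ X, G i else 1 - ∑ i ∈ X, G i

/-!
`G` and `F` are joint observables of `(E^a, E^b)` and `(E^b, E^c)`, where `E^v` has effect
`(I + v·σ)/2`. A joint observable of `G` and `F` would thus yield one of `E^a, E^b, E^c`; paired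
with the positive effects `(R·I - (±a ± b ± c)·σ)/2`, `R² = ‖a‖² + ‖b‖² + ‖c‖² = 3/2`, it would
have total weight `R - R² < 0`.

Every `G(X)` and `F(Y)` is a qubit effect with integer coordinates in the frame `(a, b, c)`
(after scaling by `4`), so joint measurability of each pair of partitionings reduces to exhibiting
`K` with `K, G(X) - K, F(Y) - K, I - G(X) - F(Y) + K ≥ 0`: a finite check over integers.
-/

lemma dotSigma_eq_of (v : E3) :
    dotSigma v = !![(v 2 : ℂ), v 0 - v 1 * Complex.I; v 0 + v 1 * Complex.I, -(v 2 : ℂ)] := by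
  ext i j
  fin_cases i <;> fin_cases j <;> simp [dotSigma, sigma1, sigma2, sigma3, sub_eq_add_neg]

lemma dotSigma_add (u v : E3) : dotSigma (u + v) = dotSigma u + dotSigma v := by
  simp only [dotSigma, PiLp.add_apply, Complex.ofReal_add, add_smul]
  abel

lemma dotSigma_smul (r : ℝ) (v : E3) : dotSigma (r • v) = (r : ℂ) • dotSigma v := by
  simp only [dotSigma, PiLp.smul_apply, smul_eq_mul, Complex.ofReal_mul, smul_add, smul_smul]

lemma dotSigma_zero : dotSigma 0 = 0 := by
  simpa using dotSigma_smul 0 0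

lemma dotSigma_neg (v : E3) : dotSigma (-v) = -dotSigma v := by
  simpa using dotSigma_smul (-1) v

lemma dotSigma_sub (u v : E3) : dotSigma (u - v) = dotSigma u - dotSigma v := by
  rw [sub_eq_add_neg, dotSigma_add, dotSigma_neg, sub_eq_add_neg]

lemma isHermitian_dotSigma (v : E3) : (dotSigma v).IsHermitian := by
  rw [IsHermitian, dotSigma_eq_of]
  ext i j
  fin_cases i <;> fin_cases j <;> simp [conjTranspose_apply, sub_eq_add_neg]

lemma trace_dotSigma (v : E3) : (dotSigma v).trace = 0 := by
  rw [dotSigma_eq_of, trace_fin_two_of]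
  ring

lemma inner_E3_eq (u v : E3) : inner ℝ u v = u 0 * v 0 + u 1 * v 1 + u 2 * v 2 := by
  simp [PiLp.inner_apply, Fin.sum_univ_three, mul_comm]

lemma trace_dotSigma_mul_dotSigma (u v : E3) :
    (dotSigma u * dotSigma v).trace = 2 * (inner ℝ u v : ℝ) := by
  rw [dotSigma_eq_of, dotSigma_eq_of, inner_E3_eq, mul_fin_two, trace_fin_two_of]
  push_cast
  linear_combination (-2 * u 1 * v 1 : ℂ) * Complex.I_sq

lemma dotSigma_mul_self (v : E3) : dotSigma v * dotSigma v = ((‖v‖ ^ 2 : ℝ) : ℂ) • 1 := by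
  rw [← real_inner_self_eq_norm_sq, inner_E3_eq, dotSigma_eq_of, mul_fin_two, one_fin_two]
  simp only [smul_of, smul_cons, smul_empty, smul_eq_mul, mul_one, mul_zero,
    EmbeddingLike.apply_eq_iff_eq, vecCons_inj, and_true]
  push_cast
  refine ⟨⟨?_, by ring⟩, by ring, ?_⟩ <;> linear_combination (-(v 1) ^ 2 : ℂ) * Complex.I_sq

lemma Amat_add (α β : ℝ) (u v : E3) : Amat α u + Amat β v = Amat (α + β) (u + v) := by
  simp only [Amat, dotSigma_add, Complex.ofReal_add, add_smul, ← smul_add]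
  abel_nf

lemma Amat_sub (α β : ℝ) (u v : E3) : Amat α u - Amat β v = Amat (α - β) (u - v) := by
  simp only [Amat, dotSigma_sub, Complex.ofReal_sub, sub_smul, ← smul_sub]
  abel_nf

lemma Amat_two_zero : Amat 2 0 = 1 := by
  simp [Amat, dotSigma_zero, smul_smul]

lemma one_sub_Amat (α : ℝ) (u : E3) : 1 - Amat α u = Amat (2 - α) (-u) := by
  rw [← Amat_two_zero, Amat_sub, zero_sub]

lemma trace_mul_Amat (M : Mat2) (ν : ℝ) (w : E3) :
    (M * Amat ν w).trace = 2⁻¹ * (ν * M.trace + (M * dotSigma w).trace) := by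
  simp only [Amat, Matrix.mul_smul, Matrix.mul_add, mul_one, trace_smul, trace_add, smul_eq_mul]

lemma trace_Amat_mul_dotSigma (ν : ℝ) (n v : E3) :
    (Amat ν n * dotSigma v).trace = (inner ℝ n v : ℝ) := by
  rw [trace_mul_comm, trace_mul_Amat, trace_dotSigma, trace_dotSigma_mul_dotSigma, real_inner_comm]
  ring

lemma posSemidef_norm_smul_one_add_dotSigma (v : E3) :
    (((‖v‖ : ℝ) : ℂ) • 1 + dotSigma v).PosSemidef := by
  rcases eq_or_ne v 0 with rfl | hv
  · simpa [dotSigma_zero] using PosSemidef.zero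
  set B : Mat2 := ((‖v‖ : ℝ) : ℂ) • 1 + dotSigma v
  have hv : 0 < ‖v‖ := norm_pos_iff.mpr hv
  have hB : Bᴴ = B := by
    simp [B, conjTranspose_add, (isHermitian_dotSigma v).eq]
  -- `B² = 2‖v‖ B`, so `B` is a positive multiple of `Bᴴ B`.
  have hBB : Bᴴ * B = ((2 * ‖v‖ : ℝ) : ℂ) • B := by
    simp only [hB, B, mul_add, add_mul, dotSigma_mul_self, Matrix.smul_mul, Matrix.mul_smul,
      smul_smul, mul_one, one_mul]
    push_cast
    module
  have : B = (((2 * ‖v‖)⁻¹ : ℝ) : ℂ) • (Bᴴ * B) := by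
    rw [hBB, smul_smul, ← Complex.ofReal_mul, inv_mul_cancel₀ (by positivity),
      Complex.ofReal_one, one_smul]
  rw [this]
  exact (posSemidef_conjTranspose_mul_self B).smul (by positivity)

lemma posSemidef_Amat {γ : ℝ} {w : E3} (h : ‖w‖ ≤ γ) : (Amat γ w).PosSemidef := by
  have : Amat γ w = (2⁻¹ : ℂ) • (((γ - ‖w‖ : ℝ) : ℂ) • 1 + (((‖w‖ : ℝ) : ℂ) • 1 + dotSigma w)) := by
    rw [Amat]
    push_cast
    module
  rw [this]
  refine PosSemidef.smul ?_ (by positivity)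
  exact (PosSemidef.one.smul (by exact_mod_cast sub_nonneg.mpr h)).add
    (posSemidef_norm_smul_one_add_dotSigma w)

open scoped MatrixOrder in
lemma Matrix.PosSemidef.trace_mul_nonneg {n : Type*} [Fintype n] [DecidableEq n]
    {A B : Matrix n n ℂ} (hA : A.PosSemidef) (hB : B.PosSemidef) : 0 ≤ (A * B).trace := by
  obtain ⟨C, rfl⟩ := CStarAlgebra.nonneg_iff_eq_star_mul_self.mp hB.nonneg
  rw [star_eq_conjTranspose, ← Matrix.mul_assoc, trace_mul_cycle]
  exact (hA.mul_mul_conjTranspose_same C).trace_nonneg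

lemma jointlyMeasurable_of_posSemidef {A B K : Mat2} (hK : K.PosSemidef)
    (hAK : (A - K).PosSemidef) (hBK : (B - K).PosSemidef) (hABK : (1 - A - B + K).PosSemidef) :
    JMfin (fun i : Fin 2 => if i = 1 then A else 1 - A)
      (fun j : Fin 2 => if j = 1 then B else 1 - B) := by
  refine ⟨![![1 - A - B + K, B - K], ![A - K, K]], ?_, ?_, fun i => ?_, fun j => ?_⟩
  · intro i j
    fin_cases i <;> fin_cases j <;> assumption
  · simp [Fin.sum_univ_two]
  · fin_cases i <;> simp [Fin.sum_univ_two]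
  · fin_cases j <;>
      simp only [Fin.sum_univ_two, Fin.zero_eta, Fin.mk_one, Fin.isValue, cons_val_zero,
        cons_val_one, cons_val_fin_one, zero_ne_one, if_true, if_false] <;>
      abel

lemma JMfin.jointlyMeasurable3 {G F : Fin 2 × Fin 2 → Mat2} {E₁ E₂ E₃ : Fin 2 → Mat2}
    (h : JMfin G F) (hG : ∀ i, ∑ j, G (i, j) = E₁ i) (hF₂ : ∀ j, ∑ k, F (j, k) = E₂ j)
    (hF₃ : ∀ k, ∑ j, F (j, k) = E₃ k) : JointlyMeasurable3 E₁ E₂ E₃ := by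
  obtain ⟨K, hK, hsum, hrow, hcol⟩ := h
  simp only [Fintype.sum_prod_type] at hsum hrow hcol
  have h₁ : ∀ i, ∑ j, ∑ k, ∑ l, K (i, l) (j, k) = E₁ i := fun i => by
    rw [← hG, Finset.sum_congr rfl fun j _ => Finset.sum_comm, Finset.sum_comm]
    exact Finset.sum_congr rfl fun l _ => hrow (i, l)
  refine ⟨fun i j k => ∑ l, K (i, l) (j, k), fun i j k => posSemidef_sum _ fun l _ => hK _ _,
    ?_, h₁, fun j => ?_, fun k => ?_⟩
  · simpa only [h₁, ← hG, ← hrow] using hsum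
  · rw [← hF₂, Finset.sum_comm]
    exact Finset.sum_congr rfl fun k _ => hcol (j, k)
  · rw [← hF₃, Finset.sum_comm]
    exact Finset.sum_congr rfl fun j _ => hcol (j, k)

def sgn (i : Fin 2) : ℤ := (-1) ^ ((i : ℕ) + 1)

@[simp] lemma sgn_zero : sgn 0 = -1 := rfl

@[simp] lemma sgn_one : sgn 1 = 1 := rfl

lemma sgn_sq (i : Fin 2) : sgn i ^ 2 = 1 := by
  fin_cases i <;> rfl

lemma sgn_cast_sq (i : Fin 2) : (sgn i : ℝ) ^ 2 = 1 := by
  exact_mod_cast sgn_sq i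

lemma Eobs_one_eq (v : E3) (i : Fin 2) : Eobs 1 v i = Amat 1 ((sgn i : ℝ) • v) := by
  fin_cases i
  · show 1 - Amat 1 v = _
    rw [one_sub_Amat]
    norm_num
  · show Amat 1 v = _
    simp

lemma sum_sgn_mul_trace_Eobs_mul_dotSigma (v : E3) :
    ∑ i, ((sgn i : ℝ) : ℂ) * (Eobs 1 v i * dotSigma v).trace = 2 * ((‖v‖ ^ 2 : ℝ) : ℂ) := by
  simp only [Fin.sum_univ_two, Eobs_one_eq, trace_Amat_mul_dotSigma, real_inner_smul_left,
    real_inner_self_eq_norm_sq, sgn_zero, sgn_one]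
  push_cast
  ring

lemma IsJointObs3.sum_trace_mul_Amat {M : Fin 2 → Fin 2 → Fin 2 → Mat2}
    {E₁ E₂ E₃ : Fin 2 → Mat2} (hM : IsJointObs3 M E₁ E₂ E₃) (ν : ℝ) (a b c : E3) :
    ∑ i, ∑ j, ∑ k,
        (M i j k * Amat ν (-((sgn i : ℝ) • a + (sgn j : ℝ) • b + (sgn k : ℝ) • c))).trace =
      ν - 2⁻¹ * (∑ i, ((sgn i : ℝ) : ℂ) * (E₁ i * dotSigma a).trace +
        ∑ j, ((sgn j : ℝ) : ℂ) * (E₂ j * dotSigma b).trace +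
        ∑ k, ((sgn k : ℝ) : ℂ) * (E₃ k * dotSigma c).trace) := by
  obtain ⟨-, hsum, h₁, h₂, h₃⟩ := hM
  set s : Fin 2 → ℂ := fun i => ((sgn i : ℝ) : ℂ)
  have hterm : ∀ i j k,
      (M i j k * Amat ν (-((sgn i : ℝ) • a + (sgn j : ℝ) • b + (sgn k : ℝ) • c))).trace =
        2⁻¹ * (ν * (M i j k).trace - (s i * (M i j k * dotSigma a).trace +
          s j * (M i j k * dotSigma b).trace + s k * (M i j k * dotSigma c).trace)) := by
    intro i j k
    simp only [trace_mul_Amat, dotSigma_neg, dotSigma_add, dotSigma_smul, Matrix.mul_neg,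
      Matrix.mul_add, Matrix.mul_smul, trace_neg, trace_add, trace_smul, smul_eq_mul, s]
    ring
  have htr : ∑ i, ∑ j, ∑ k, (M i j k).trace = 2 := by
    simp only [← trace_sum, hsum, trace_one, Fintype.card_fin, Nat.cast_ofNat]
  have ha : ∑ i, ∑ j, ∑ k, s i * (M i j k * dotSigma a).trace =
      ∑ i, s i * (E₁ i * dotSigma a).trace := by
    simp only [← Finset.mul_sum, ← trace_sum, ← Finset.sum_mul, h₁]
  have hb : ∑ i, ∑ j, ∑ k, s j * (M i j k * dotSigma b).trace =
      ∑ j, s j * (E₂ j * dotSigma b).trace := by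
    rw [Finset.sum_comm]
    simp only [← Finset.mul_sum, ← trace_sum, ← Finset.sum_mul, h₂]
  have hc : ∑ i, ∑ j, ∑ k, s k * (M i j k * dotSigma c).trace =
      ∑ k, s k * (E₃ k * dotSigma c).trace := by
    rw [Finset.sum_congr rfl fun i _ => Finset.sum_comm, Finset.sum_comm]
    simp only [← Finset.mul_sum, ← trace_sum, ← Finset.sum_mul, h₃]
  calc _ = 2⁻¹ * (ν * ∑ i, ∑ j, ∑ k, (M i j k).trace -
        (∑ i, ∑ j, ∑ k, s i * (M i j k * dotSigma a).trace +
          ∑ i, ∑ j, ∑ k, s j * (M i j k * dotSigma b).trace +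
          ∑ i, ∑ j, ∑ k, s k * (M i j k * dotSigma c).trace)) := by
        simp only [hterm, mul_sub, mul_add, Finset.mul_sum, Finset.sum_sub_distrib,
          Finset.sum_add_distrib]
    _ = _ := by
        rw [htr, ha, hb, hc]
        ring

lemma norm_sq_smul_add_smul_add_smul {a b c : E3} (hab : inner ℝ a b = 0) (hac : inner ℝ a c = 0)
    (hbc : inner ℝ b c = 0) (x y z : ℝ) :
    ‖x • a + y • b + z • c‖ ^ 2 = x ^ 2 * ‖a‖ ^ 2 + y ^ 2 * ‖b‖ ^ 2 + z ^ 2 * ‖c‖ ^ 2 := by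
  rw [← real_inner_self_eq_norm_sq, ← real_inner_self_eq_norm_sq, ← real_inner_self_eq_norm_sq,
    ← real_inner_self_eq_norm_sq]
  simp only [inner_add_left, inner_add_right, real_inner_smul_left, real_inner_smul_right,
    real_inner_comm a b ▸ hab, real_inner_comm a c ▸ hac, real_inner_comm b c ▸ hbc, hab, hac, hbc]
  ring

lemma norm_sq_smul_add_smul {a b : E3} (hab : inner ℝ a b = 0) (x y : ℝ) :
    ‖x • a + y • b‖ ^ 2 = x ^ 2 * ‖a‖ ^ 2 + y ^ 2 * ‖b‖ ^ 2 := by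
  simpa using norm_sq_smul_add_smul_add_smul hab (inner_zero_right a) (inner_zero_right b) x y 0

lemma norm_sq_eq_half_of_norm {a : E3} (ha : ‖a‖ = 1 / Real.sqrt 2) : ‖a‖ ^ 2 = 1 / 2 := by
  rw [ha, div_pow, Real.sq_sqrt zero_le_two, one_pow]

lemma not_jointlyMeasurable3_Eobs {a b c : E3} (hab : inner ℝ a b = 0) (hac : inner ℝ a c = 0)
    (hbc : inner ℝ b c = 0) (h : 1 < ‖a‖ ^ 2 + ‖b‖ ^ 2 + ‖c‖ ^ 2) :
    ¬ JointlyMeasurable3 (Eobs 1 a) (Eobs 1 b) (Eobs 1 c) := by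
  rintro ⟨M, hM⟩
  set R := Real.sqrt (‖a‖ ^ 2 + ‖b‖ ^ 2 + ‖c‖ ^ 2)
  have hR : 1 < R := by rwa [Real.lt_sqrt zero_le_one, one_pow]
  have hR2 : R ^ 2 = ‖a‖ ^ 2 + ‖b‖ ^ 2 + ‖c‖ ^ 2 := Real.sq_sqrt (by positivity)
  have hnorm : ∀ i j k : Fin 2,
      ‖-((sgn i : ℝ) • a + (sgn j : ℝ) • b + (sgn k : ℝ) • c)‖ = R := fun i j k => by
    rw [norm_neg, ← Real.sqrt_sq (norm_nonneg _), norm_sq_smul_add_smul_add_smul hab hac hbc,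
      sgn_cast_sq, sgn_cast_sq, sgn_cast_sq, one_mul, one_mul, one_mul]
  have hpos : 0 ≤ ∑ i, ∑ j, ∑ k,
      (M i j k * Amat R (-((sgn i : ℝ) • a + (sgn j : ℝ) • b + (sgn k : ℝ) • c))).trace :=
    Finset.sum_nonneg fun i _ => Finset.sum_nonneg fun j _ => Finset.sum_nonneg fun k _ =>
      (hM.1 i j k).trace_mul_nonneg (posSemidef_Amat (hnorm i j k).le)
  rw [hM.sum_trace_mul_Amat, sum_sgn_mul_trace_Eobs_mul_dotSigma,
    sum_sgn_mul_trace_Eobs_mul_dotSigma, sum_sgn_mul_trace_Eobs_mul_dotSigma] at hpos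
  have : (0 : ℂ) ≤ ((R - R ^ 2 : ℝ) : ℂ) := by
    convert hpos using 1
    rw [hR2]
    push_cast
    ring
  rw [Complex.zero_le_real] at this
  nlinarith

lemma nvec_eq (a b : E3) (i j : Fin 2) :
    nvec a b i j = ((sgn i : ℝ) / 2) • a + ((sgn j : ℝ) / 2) • b := by
  simp only [nvec, sgn]
  push_cast
  module

lemma Gab_eq_Amat_norm (a b : E3) (i j : Fin 2) :
    Gab a b i j = Amat ‖nvec a b i j‖ (nvec a b i j) := by
  rcases eq_or_ne (nvec a b i j) 0 with h | h
  · simp [Gab, Amat, h, dotSigma_zero]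
  · have : (‖nvec a b i j‖ : ℂ) ≠ 0 := by exact_mod_cast norm_ne_zero_iff.mpr h
    rw [Gab, Amat, dotSigma_smul, smul_smul, smul_add, smul_add, smul_smul, smul_smul]
    push_cast
    congr 2
    · ring
    · field_simp

lemma Gab_eq_of_orthogonal {a b : E3} (hab : inner ℝ a b = 0) (ha : ‖a‖ = 1 / Real.sqrt 2)
    (hb : ‖b‖ = 1 / Real.sqrt 2) (i j : Fin 2) :
    Gab a b i j = Amat (1 / 2) (((sgn i : ℝ) / 2) • a + ((sgn j : ℝ) / 2) • b) := by
  have hsq : ‖nvec a b i j‖ ^ 2 = (1 / 2) ^ 2 := by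
    rw [nvec_eq, norm_sq_smul_add_smul hab, norm_sq_eq_half_of_norm ha,
      norm_sq_eq_half_of_norm hb, div_pow, div_pow, sgn_cast_sq, sgn_cast_sq]
    norm_num
  rw [Gab_eq_Amat_norm, (pow_left_inj₀ (norm_nonneg _) (by norm_num) two_ne_zero).mp hsq,
    nvec_eq]

lemma sum_Gab_snd_eq_Eobs {a b : E3} (hab : inner ℝ a b = 0) (ha : ‖a‖ = 1 / Real.sqrt 2)
    (hb : ‖b‖ = 1 / Real.sqrt 2) (i : Fin 2) : ∑ j, Gab a b i j = Eobs 1 a i := by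
  rw [Fin.sum_univ_two, Gab_eq_of_orthogonal hab ha hb, Gab_eq_of_orthogonal hab ha hb, Amat_add,
    Eobs_one_eq, sgn_zero, sgn_one]
  exact congrArg₂ Amat (by norm_num) (by push_cast; module)

lemma sum_Gab_fst_eq_Eobs {a b : E3} (hab : inner ℝ a b = 0) (ha : ‖a‖ = 1 / Real.sqrt 2)
    (hb : ‖b‖ = 1 / Real.sqrt 2) (j : Fin 2) : ∑ i, Gab a b i j = Eobs 1 b j := by
  rw [Fin.sum_univ_two, Gab_eq_of_orthogonal hab ha hb, Gab_eq_of_orthogonal hab ha hb, Amat_add,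
    Eobs_one_eq, sgn_zero, sgn_one]
  exact congrArg₂ Amat (by norm_num) (by push_cast; module)

/-- Coordinates with respect to `(I, a·σ, b·σ, c·σ)`, scaled by `4` so that `G(X)`, `F(Y)` and
the joint observables built from them all have integer coordinates. -/
def frameMat (a b c : E3) : (Fin 4 → ℤ) →+ Mat2 :=
  AddMonoidHom.mk'
    (fun v => Amat (v 0 / 4) ((v 1 / 4 : ℝ) • a + (v 2 / 4 : ℝ) • b + (v 3 / 4 : ℝ) • c))
    (fun v w => by
      rw [Amat_add]
      congr 1
      · push_cast [Pi.add_apply]; ring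
      · push_cast [Pi.add_apply]; module)

def InBlochCone (v : Fin 4 → ℤ) : Prop := 0 ≤ v 0 ∧ v 1 ^ 2 + v 2 ^ 2 + v 3 ^ 2 ≤ 2 * v 0 ^ 2

instance (v : Fin 4 → ℤ) : Decidable (InBlochCone v) := by
  unfold InBlochCone; infer_instance

lemma frameMat_vec {a b c : E3} (r x y z : ℤ) : frameMat a b c ![r, x, y, z] =
    Amat (r / 4) ((x / 4 : ℝ) • a + (y / 4 : ℝ) • b + (z / 4 : ℝ) • c) :=
  rfl

lemma frameMat_eight {a b c : E3} : frameMat a b c ![8, 0, 0, 0] = 1 := by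
  rw [← Amat_two_zero]
  exact congrArg₂ Amat (by norm_num) (by simp)

lemma posSemidef_frameMat {a b c : E3} (hab : inner ℝ a b = 0) (hac : inner ℝ a c = 0)
    (hbc : inner ℝ b c = 0) (ha : ‖a‖ = 1 / Real.sqrt 2) (hb : ‖b‖ = 1 / Real.sqrt 2)
    (hc : ‖c‖ = 1 / Real.sqrt 2) {v : Fin 4 → ℤ} (hv : InBlochCone v) :
    (frameMat a b c v).PosSemidef := by
  obtain ⟨hv0, hv⟩ := hv
  refine posSemidef_Amat ((pow_le_pow_iff_left₀ (norm_nonneg _) (by positivity) two_ne_zero).mp ?_)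
  rw [norm_sq_smul_add_smul_add_smul hab hac hbc, norm_sq_eq_half_of_norm ha,
    norm_sq_eq_half_of_norm hb, norm_sq_eq_half_of_norm hc]
  have : ((v 1 ^ 2 + v 2 ^ 2 + v 3 ^ 2 : ℤ) : ℝ) ≤ ((2 * v 0 ^ 2 : ℤ) : ℝ) := by exact_mod_cast hv
  push_cast at this
  linarith

lemma Gab_eq_frameMat_ab {a b c : E3} (hab : inner ℝ a b = 0) (ha : ‖a‖ = 1 / Real.sqrt 2)
    (hb : ‖b‖ = 1 / Real.sqrt 2) (i j : Fin 2) :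
    Gab a b i j = 2 • frameMat a b c ![1, sgn i, sgn j, 0] := by
  rw [Gab_eq_of_orthogonal hab ha hb, frameMat_vec, two_nsmul, Amat_add]
  exact congrArg₂ Amat (by norm_num) (by module)

lemma Gab_eq_frameMat_bc {a b c : E3} (hbc : inner ℝ b c = 0) (hb : ‖b‖ = 1 / Real.sqrt 2)
    (hc : ‖c‖ = 1 / Real.sqrt 2) (i j : Fin 2) :
    Gab b c i j = 2 • frameMat a b c ![1, 0, sgn i, sgn j] := by
  rw [Gab_eq_of_orthogonal hbc hb hc, frameMat_vec, two_nsmul, Amat_add]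
  exact congrArg₂ Amat (by norm_num) (by module)

def IsJointCertificate (A B K : Fin 4 → ℤ) : Prop :=
  InBlochCone K ∧ InBlochCone (A - K) ∧ InBlochCone (B - K) ∧
    InBlochCone (![8, 0, 0, 0] - A - B + K)

instance (A B K : Fin 4 → ℤ) : Decidable (IsJointCertificate A B K) := by
  unfold IsJointCertificate; infer_instance

lemma jointlyMeasurable_of_isJointCertificate {a b c : E3} (hab : inner ℝ a b = 0)
    (hac : inner ℝ a c = 0) (hbc : inner ℝ b c = 0) (ha : ‖a‖ = 1 / Real.sqrt 2)
    (hb : ‖b‖ = 1 / Real.sqrt 2) (hc : ‖c‖ = 1 / Real.sqrt 2) {A B K : Fin 4 → ℤ}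
    (h : IsJointCertificate A B K) :
    JMfin (fun i : Fin 2 => if i = 1 then frameMat a b c A else 1 - frameMat a b c A)
      (fun j : Fin 2 => if j = 1 then frameMat a b c B else 1 - frameMat a b c B) := by
  obtain ⟨hK, hAK, hBK, hABK⟩ := h
  have psd := fun {v} (hv : InBlochCone v) => posSemidef_frameMat hab hac hbc ha hb hc hv
  refine jointlyMeasurable_of_posSemidef (K := frameMat a b c K) (psd hK) ?_ ?_ ?_
  · simpa only [map_sub] using psd hAK
  · simpa only [map_sub] using psd hBK
  · simpa only [map_add, map_sub, frameMat_eight] using psd hABK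

def frameCoordsAB (X : Finset (Fin 2 × Fin 2)) : Fin 4 → ℤ := ∑ p ∈ X, ![1, sgn p.1, sgn p.2, 0]

def frameCoordsBC (Y : Finset (Fin 2 × Fin 2)) : Fin 4 → ℤ := ∑ p ∈ Y, ![1, 0, sgn p.1, sgn p.2]

/-- The certificate is `K = λ G(X) + μ F(Y) - λμ I` with `λ = l/2` and `μ = k/2`. -/
lemma exists_isJointCertificate (X Y : Finset (Fin 2 × Fin 2)) :
    ∃ l k : Fin 3, IsJointCertificate (2 • frameCoordsAB X) (2 • frameCoordsBC Y)
      ((l : ℤ) • frameCoordsAB X + (k : ℤ) • frameCoordsBC Y -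
        (2 * l * k : ℤ) • ![1, 0, 0, 0]) := by
  revert X Y
  decide +kernel

lemma jointlyMeasurable_partitioningFin {a b c : E3} (hab : inner ℝ a b = 0)
    (hac : inner ℝ a c = 0) (hbc : inner ℝ b c = 0) (ha : ‖a‖ = 1 / Real.sqrt 2)
    (hb : ‖b‖ = 1 / Real.sqrt 2) (hc : ‖c‖ = 1 / Real.sqrt 2) (X Y : Finset (Fin 2 × Fin 2)) :
    JMfin (partitioningFin (fun p : Fin 2 × Fin 2 => Gab a b p.1 p.2) X)
      (partitioningFin (fun p : Fin 2 × Fin 2 => Gab b c p.1 p.2) Y) := by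
  have hG : ∑ p ∈ X, Gab a b p.1 p.2 = frameMat a b c (2 • frameCoordsAB X) := by
    simp only [Gab_eq_frameMat_ab (c := c) hab ha hb, frameCoordsAB, map_nsmul, map_sum,
      Finset.smul_sum]
  have hF : ∑ p ∈ Y, Gab b c p.1 p.2 = frameMat a b c (2 • frameCoordsBC Y) := by
    simp only [Gab_eq_frameMat_bc (a := a) hbc hb hc, frameCoordsBC, map_nsmul, map_sum,
      Finset.smul_sum]
  obtain ⟨l, k, h⟩ := exists_isJointCertificate X Y
  unfold partitioningFin
  rw [hG, hF]
  exact jointlyMeasurable_of_isJointCertificate hab hac hbc ha hb hc h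

/-- for mutually orthogonal `a`, `b`, `c` of norm `1/√2`, the four-outcome
joint observables `G` (of `E^{1,a}`, `E^{1,b}`) and `F` (of `E^{1,b}`, `E^{1,c}`) are not
jointly measurable, yet all their two-outcome partitionings are pairwise jointly measurable. -/
theorem partitionings_jointly_measurable_but_not_observables (a b c : E3)
    (hab : (inner ℝ a b : ℝ) = 0) (hac : (inner ℝ a c : ℝ) = 0) (hbc : (inner ℝ b c : ℝ) = 0)
    (hna : ‖a‖ = 1 / Real.sqrt 2) (hnb : ‖b‖ = 1 / Real.sqrt 2) (hnc : ‖c‖ = 1 / Real.sqrt 2) :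
    ¬ JMfin (fun p : Fin 2 × Fin 2 => Gab a b p.1 p.2) (fun p : Fin 2 × Fin 2 => Gab b c p.1 p.2) ∧
      ∀ X Y : Finset (Fin 2 × Fin 2),
        JMfin (partitioningFin (fun p : Fin 2 × Fin 2 => Gab a b p.1 p.2) X)
          (partitioningFin (fun p : Fin 2 × Fin 2 => Gab b c p.1 p.2) Y) := by
  have hnorm : 1 < ‖a‖ ^ 2 + ‖b‖ ^ 2 + ‖c‖ ^ 2 := by
    rw [norm_sq_eq_half_of_norm hna, norm_sq_eq_half_of_norm hnb, norm_sq_eq_half_of_norm hnc]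
    norm_num
  refine ⟨fun h => ?_, jointlyMeasurable_partitioningFin hab hac hbc hna hnb hnc⟩
  exact not_jointlyMeasurable3_Eobs hab hac hbc hnorm <| h.jointlyMeasurable3
    (sum_Gab_snd_eq_Eobs hab hna hnb) (sum_Gab_snd_eq_Eobs hbc hnb hnc)
    (sum_Gab_fst_eq_Eobs hbc hnb hnc)
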